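/- Let f : ℝ → ℝ, X a set, c ∈ ℝ, ε > 0, M = max_{x∈X} f(x), m = min_{x∈X} f(x). For x ∈ X and δ ∈ {0,1}, the pair of inequalities (M - c)·δ ≤ M - f(x) and (c + ε - m)·δ ≥ ε + c - f(x) holds if and only if (δ = 1 → f(x) ≤ c) and (δ = 0 → f(x) ≥ c + ε). -/
import Mathlib

theorem stmt1 (f : ℝ → ℝ) (X : Set ℝ) (c ε M m : ℝ) (hε : 0 < ε)
    (hM : IsGreatest (f '' X) M) (hm : IsLeast (f '' X) m)
    (x : ℝ) (hx : x ∈ X) (δ : ℝ) (hδ : δ ∈ ({0, 1} : Set ℝ)) :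
    ((M - c) * δ ≤ M - f x ∧ (c + ε - m) * δ ≥ ε + c - f x) ↔
      ((δ = 1 → f x ≤ c) ∧ (δ = 0 → f x ≥ c + ε)) := by
  have hfM : f x ≤ M := hM.2 ⟨x, hx, rfl⟩
  have hfm : m ≤ f x := hm.2 ⟨x, hx, rfl⟩
  rcases hδ with h | h <;> subst h <;> constructor <;>
    rintro ⟨h1, h2⟩ <;> simp_all <;>
    first
      | linarith
      | (constructor <;> (try intro h3) <;> linarith)
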